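/- Let z₀, z₁, z₂ ∈ O_K be relatively prime with D = h(z₀,z₁,z₂) a positive integer. Then there exists γ ∈ PSU_h(K) such that γ·[z₀:z₁:z₂] = [−2D:0:1] in ℙ²(ℂ). -/

import Mathlib

open scoped ComplexConjugate Quaternion TensorProduct
open Matrix

noncomputable section

/-- The Hermitian form `h(z) = -z₀ conj z₂ - z₂ conj z₀ + z₁ conj z₁` (a real number). -/
def hform (z : Fin 3 → ℂ) : ℝ :=
  (-(z 0 * conj (z 2)) - z 2 * conj (z 0) + z 1 * conj (z 1)).re

/-- The Hermitian product associated with `hform`. -/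
def hprod (z w : Fin 3 → ℂ) : ℂ :=
  -(z 0 * conj (w 2)) - z 2 * conj (w 0) + z 1 * conj (w 1)

/-- The special unitary group of `hform`, as a set of matrices. -/
def SUhSet : Set (Matrix (Fin 3) (Fin 3) ℂ) :=
  {g | g.det = 1 ∧ ∀ z, hform (g.mulVec z) = hform z}

abbrev SL3C := Matrix.SpecialLinearGroup (Fin 3) ℂ

/-- The special unitary group of `hform`, as a subgroup of `SL₃(ℂ)`. -/
def SUh : Subgroup SL3C where
  carrier := {g | ∀ z, hform ((g : Matrix (Fin 3) (Fin 3) ℂ).mulVec z) = hform z}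
  one_mem' := by intro z; simp
  mul_mem' := by
    intro a b ha hb z
    rw [Matrix.SpecialLinearGroup.coe_mul, ← Matrix.mulVec_mulVec, ha, hb]
  inv_mem' := by
    intro a ha z
    have h1 := ha (((a⁻¹ : SL3C) : Matrix (Fin 3) (Fin 3) ℂ).mulVec z)
    rw [Matrix.mulVec_mulVec, ← Matrix.SpecialLinearGroup.coe_mul, mul_inv_cancel,
      Matrix.SpecialLinearGroup.coe_one, Matrix.one_mulVec] at h1
    exact h1.symm

/-- The subgroup `𝕌₃·Id` of scalar matrices by cube roots of unity. -/
def U3 : Subgroup SUh where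
  carrier := {g | ∃ ζ : ℂ, ζ ^ 3 = 1 ∧ ((g : SL3C) : Matrix (Fin 3) (Fin 3) ℂ) = ζ • 1}
  one_mem' := ⟨1, by norm_num, by simp⟩
  mul_mem' := by
    rintro a b ⟨ζ, h3, hg⟩ ⟨ξ, k3, hh⟩
    refine ⟨ζ * ξ, by rw [mul_pow, h3, k3, one_mul], ?_⟩
    push_cast [Subgroup.coe_mul, Matrix.SpecialLinearGroup.coe_mul]
    rw [hg, hh, smul_mul_smul_comm, one_mul]
  inv_mem' := by
    rintro a ⟨ζ, h3, hg⟩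
    have hζ : ζ ≠ 0 := by
      intro h; rw [h] at h3; norm_num at h3
    refine ⟨ζ⁻¹, by rw [inv_pow, h3, inv_one], ?_⟩
    have h1 : ((a : SL3C) : Matrix (Fin 3) (Fin 3) ℂ) *
        (((a⁻¹ : SUh) : SL3C) : Matrix (Fin 3) (Fin 3) ℂ) = 1 := by
      rw [← Matrix.SpecialLinearGroup.coe_mul, ← Subgroup.coe_mul, mul_inv_cancel,
        Subgroup.coe_one, Matrix.SpecialLinearGroup.coe_one]
    rw [hg, Matrix.smul_mul, Matrix.one_mul] at h1
    calc (((a⁻¹ : SUh) : SL3C) : Matrix (Fin 3) (Fin 3) ℂ)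
        = ζ⁻¹ • (ζ • (((a⁻¹ : SUh) : SL3C) : Matrix (Fin 3) (Fin 3) ℂ)) := by
          rw [smul_smul, inv_mul_cancel₀ hζ, one_smul]
      _ = ζ⁻¹ • (1 : Matrix (Fin 3) (Fin 3) ℂ) := by rw [h1]

instance U3_normal : U3.Normal := by
  constructor
  rintro n ⟨ζ, h3, hn⟩ g
  refine ⟨ζ, h3, ?_⟩
  push_cast [Subgroup.coe_mul, Matrix.SpecialLinearGroup.coe_mul]
  rw [hn, Matrix.mul_smul, Matrix.mul_one, Matrix.smul_mul]
  simp [Matrix.mul_adjugate, Matrix.SpecialLinearGroup.det_coe]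

/-- The projective special unitary group `PSU_h = SU_h/(𝕌₃·Id)`. -/
abbrev PSUhGrp := SUh ⧸ U3

/-- The topology on `SL₃(ℂ)` induced from `M₃(ℂ)`. -/
instance : TopologicalSpace SL3C :=
  TopologicalSpace.induced (fun g => (g : Matrix (Fin 3) (Fin 3) ℂ)) inferInstance

abbrev ProjC2 := Projectivization ℂ (Fin 3 → ℂ)

instance : TopologicalSpace ProjC2 :=
  instTopologicalSpaceQuotient

lemma mulVecLin_inj (g : SL3C) :
    Function.Injective ((g : Matrix (Fin 3) (Fin 3) ℂ).mulVecLin) := by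
  intro x y hxy
  have h := congrArg (fun v => ((g⁻¹ : SL3C) : Matrix (Fin 3) (Fin 3) ℂ).mulVec v) hxy
  simpa [Matrix.mulVecLin_apply, Matrix.mulVec_mulVec,
    Matrix.adjugate_mul, Matrix.SpecialLinearGroup.det_coe, Matrix.one_mulVec, one_smul] using h

/-- The action of an element of `SU_h` on the projective plane. -/
def pact (g : SUh) (p : ProjC2) : ProjC2 :=
  Projectivization.map (((g : SL3C) : Matrix (Fin 3) (Fin 3) ℂ).mulVecLin)
    (mulVecLin_inj (g : SL3C)) p

lemma pact_mk (g : SUh) (v : Fin 3 → ℂ) (hv : v ≠ 0) :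
    pact g (Projectivization.mk ℂ v hv) =
      Projectivization.mk ℂ (((g : SL3C) : Matrix (Fin 3) (Fin 3) ℂ).mulVec v)
        (by simpa [Matrix.mulVecLin_apply] using
          (map_zero (((g : SL3C) : Matrix (Fin 3) (Fin 3) ℂ).mulVecLin) ▸
            (mulVecLin_inj (g : SL3C)).ne hv)) := by
  exact Projectivization.map_mk _ _ v hv

lemma pact_one (p : ProjC2) : pact 1 p = p := by
  induction p using Projectivization.ind with
  | h v hv => simp [pact_mk]

lemma pact_mul (g h : SUh) (p : ProjC2) : pact (g * h) p = pact g (pact h p) := by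
  induction p using Projectivization.ind with
  | h v hv =>
      rw [pact_mk, pact_mk, pact_mk]
      congr 1
      push_cast [Subgroup.coe_mul, Matrix.SpecialLinearGroup.coe_mul]
      rw [Matrix.mulVec_mulVec]

lemma pact_u3 {u : SUh} (hu : u ∈ U3) (p : ProjC2) : pact u p = p := by
  obtain ⟨ζ, h3, hu⟩ := hu
  have hζ : ζ ≠ 0 := by intro h; rw [h] at h3; norm_num at h3
  induction p using Projectivization.ind with
  | h v hv =>
      rw [pact_mk]
      rw [Projectivization.mk_eq_mk_iff]
      exact ⟨Units.mk0 ζ hζ, by simp [hu, Matrix.smul_mulVec]⟩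

/-- The action of an element of `PSU_h` on the projective plane. -/
def pactQ (γ : PSUhGrp) (p : ProjC2) : ProjC2 :=
  Quotient.liftOn' γ (fun g => pact g p) (by
    intro a b hab
    have h : a⁻¹ * b ∈ U3 := QuotientGroup.leftRel_apply.mp hab
    have hb : b = a * (a⁻¹ * b) := by group
    show pact a p = pact b p
    rw [hb, pact_mul, pact_u3 h])

lemma pactQ_mk (g : SUh) (p : ProjC2) :
    pactQ ((g : PSUhGrp)) p = pact g p := rfl

lemma pactQ_one (p : ProjC2) : pactQ 1 p = p := pact_one p

lemma pactQ_mul (γ δ : PSUhGrp) (p : ProjC2) :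
    pactQ (γ * δ) p = pactQ γ (pactQ δ p) := by
  induction γ using Quotient.inductionOn' with
  | h g =>
      induction δ using Quotient.inductionOn' with
      | h d => exact pact_mul g d p

/-- The stabiliser in `PSU_h` of a point of the projective plane. -/
def stabPSU (p : ProjC2) : Subgroup PSUhGrp where
  carrier := {γ | pactQ γ p = p}
  one_mem' := pactQ_one p
  mul_mem' := by
    intro a b ha hb
    show pactQ (a * b) p = p
    rw [pactQ_mul, hb, ha]
  inv_mem' := by
    intro a ha
    show pactQ a⁻¹ p = p
    conv_lhs => rw [← ha]
    rw [← pactQ_mul, inv_mul_cancel, pactQ_one]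

lemma det_mem_subring {S : Subring ℂ} {M : Matrix (Fin 3) (Fin 3) ℂ}
    (h : ∀ i j, M i j ∈ S) : M.det ∈ S := by
  rw [Matrix.det_apply']
  exact sum_mem (fun σ _ =>
    S.mul_mem (intCast_mem S _) (prod_mem (fun i _ => h _ _)))

/-- The subgroup of `SU_h` of matrices with all entries in a given subring of `ℂ`. -/
def SUhIn (S : Subring ℂ) : Subgroup SUh where
  carrier := {g | ∀ i j, (((g : SUh) : SL3C) : Matrix (Fin 3) (Fin 3) ℂ) i j ∈ S}
  one_mem' := by
    intro i j
    push_cast [Subgroup.coe_one, Matrix.SpecialLinearGroup.coe_one]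
    rw [Matrix.one_apply]
    split
    · exact S.one_mem
    · exact S.zero_mem
  mul_mem' := by
    intro a b ha hb i j
    push_cast [Subgroup.coe_mul, Matrix.SpecialLinearGroup.coe_mul]
    rw [Matrix.mul_apply]
    exact sum_mem (fun k _ => S.mul_mem (ha i k) (hb k j))
  inv_mem' := by
    intro a ha i j
    have hco : (((a⁻¹ : SUh) : SL3C) : Matrix (Fin 3) (Fin 3) ℂ) =
        Matrix.adjugate (((a : SUh) : SL3C) : Matrix (Fin 3) (Fin 3) ℂ) := by
      push_cast []
      exact Matrix.SpecialLinearGroup.coe_inv _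
    rw [hco, Matrix.adjugate_apply]
    refine det_mem_subring (fun i' j' => ?_)
    rw [Matrix.updateRow_apply]
    split
    · rw [Pi.single_apply]
      split
      · exact S.one_mem
      · exact S.zero_mem
    · exact ha i' j'

/-- An imaginary quadratic number field, as an intermediate field of `ℂ/ℚ`. -/
def IsImagQuad (K : IntermediateField ℚ ℂ) : Prop :=
  Module.finrank ℚ K = 2 ∧ ∃ z ∈ K, (z : ℂ).im ≠ 0

/-- The ring of integers of `K`, as a subring of `ℂ`. -/
def ringOfInt (K : IntermediateField ℚ ℂ) : Subring ℂ :=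
  (integralClosure ℤ ℂ).toSubring ⊓ K.toSubalgebra.toSubring

/-- `DK` is the discriminant of the imaginary quadratic field `K`. -/
def IsDiscOf (K : IntermediateField ℚ ℂ) (DK : ℤ) : Prop :=
  ∃ ω : ℂ, (2 * ω - DK) ^ 2 = (DK : ℂ) ∧ ringOfInt K = Subring.closure {ω}

/-- The Picard modular group `Γ_K = PSU_h(O_K)`. -/
def GammaK (K : IntermediateField ℚ ℂ) : Subgroup PSUhGrp :=
  Subgroup.map (QuotientGroup.mk' U3) (SUhIn (ringOfInt K))

/-- The group `PSU_h(K)` of elements of `PSU_h` with entries in `K`. -/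
def PSUhRat (K : IntermediateField ℚ ℂ) : Subgroup PSUhGrp :=
  Subgroup.map (QuotientGroup.mk' U3) (SUhIn K.toSubalgebra.toSubring)

/-- A point of `ℙ²(ℂ)` is positive if `h` is positive on it. -/
def PosP (p : ProjC2) : Prop := 0 < hform p.rep

/-- A point of `ℙ²(ℂ)` is rational if it has homogeneous coordinates in `K`. -/
def RationalP (K : IntermediateField ℚ ℂ) (p : ProjC2) : Prop :=
  ∃ (z : Fin 3 → ℂ) (hz : z ≠ 0), (∀ i, z i ∈ K) ∧ p = Projectivization.mk ℂ z hz

/-- A group is virtually cyclic if it has a cyclic subgroup of finite index. -/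
def VirtCyclic (G : Type*) [Group G] : Prop :=
  ∃ H : Subgroup G, IsCyclic H ∧ H.FiniteIndex

/-- A subgroup of `PSU_h` is an extended ℂ-Fuchsian subgroup if it is discrete and fixes
a positive point of `ℙ²(ℂ)`. -/
def IsExtCFuchsian (Γ : Subgroup PSUhGrp) : Prop :=
  DiscreteTopology Γ ∧ ∃ p : ProjC2, PosP p ∧ Γ ≤ stabPSU p

/-- A maximal nonelementary extended ℂ-Fuchsian subgroup of `Γ_K`. -/
def IsMaxFuchsian (K : IntermediateField ℚ ℂ) (Γ : Subgroup PSUhGrp) : Prop :=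
  Γ ≤ GammaK K ∧ IsExtCFuchsian Γ ∧ ¬ VirtCyclic Γ ∧
    ∀ Γ' : Subgroup PSUhGrp, Γ' ≤ GammaK K → IsExtCFuchsian Γ' → ¬ VirtCyclic Γ' →
      Γ ≤ Γ' → Γ' = Γ

/-- The entries `z i` are relatively prime elements of `O_K`. -/
def RelPrimeOK (K : IntermediateField ℚ ℂ) (z : Fin 3 → ℂ) : Prop :=
  ∀ d : ℂ, d ∈ ringOfInt K → (∀ i, ∃ c ∈ ringOfInt K, z i = d * c) →
    ∃ u ∈ ringOfInt K, d * u = 1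

/-- The subgroup `Γ` has discriminant `D`: its fixed rational point, written with
relatively prime homogeneous coordinates in `O_K`, satisfies `h = D`. -/
def HasDisc (K : IntermediateField ℚ ℂ) (Γ : Subgroup PSUhGrp) (D : ℕ) : Prop :=
  ∃ (z : Fin 3 → ℂ) (hz : z ≠ 0), (∀ i, z i ∈ ringOfInt K) ∧ RelPrimeOK K z ∧
    Γ ≤ stabPSU (Projectivization.mk ℂ z hz) ∧ hform z = D

/-- Two subgroups of `G` are commensurable up to conjugacy in `G`. -/
def CommensUpToConj {G : Type*} [Group G] (Γ Γ' : Subgroup G) : Prop :=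
  ∃ g : G, Subgroup.Commensurable (Subgroup.map (MulAut.conj g).toMonoidHom Γ') Γ

/-- The point `[-D : 0 : 1]` of `ℙ²(ℂ)`. -/
def ptD (D : ℕ) : ProjC2 :=
  Projectivization.mk ℂ ![-(D : ℂ), 0, 1] (by
    intro h
    have := congrFun h 2
    simp at this)

/-- The stabiliser `Γ_{K,D}` of `[-D:0:1]` in `Γ_K`. -/
def GammaKD (K : IntermediateField ℚ ℂ) (D : ℕ) : Subgroup PSUhGrp :=
  GammaK K ⊓ stabPSU (ptD D)

/-- The Poincaré hypersphere. -/
def HS : Set ProjC2 := {p | hform p.rep = 0}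

/-- A chain: the intersection of a complex projective line with the hypersphere,
when nonempty and not a single point. -/
def IsChainSet (C : Set ProjC2) : Prop :=
  (∃ W : Submodule ℂ (Fin 3 → ℂ), Module.finrank ℂ W = 2 ∧
    C = {p : ProjC2 | p.rep ∈ W} ∩ HS) ∧ C.Nonempty ∧ ¬ ∃ x, C = {x}

/-- A chain is `K`-arithmetic if its stabiliser in `Γ_K` has a dense orbit in it. -/
def IsKArithChain (K : IntermediateField ℚ ℂ) (C : Set ProjC2) : Prop :=
  IsChainSet C ∧ ∃ x ∈ C, ∀ y ∈ C,
    y ∈ closure {q : ProjC2 | ∃ γ ∈ GammaK K, pactQ γ '' C = C ∧ pactQ γ x = q}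

/-- A quaternion over `ℚ` has integral coordinates. -/
def IntQuat {a b : ℚ} (x : ℍ[ℚ, a, b]) : Prop :=
  (∃ n : ℤ, x.re = n) ∧ (∃ n : ℤ, x.imI = n) ∧ (∃ n : ℤ, x.imJ = n) ∧ (∃ n : ℤ, x.imK = n)

/-- The reduced norm on the quaternion algebra `(a,b/ℚ)`. -/
def qnorm (a b : ℚ) (x : ℍ[ℚ, a, b]) : ℚ :=
  x.re ^ 2 - a * x.imI ^ 2 - b * x.imJ ^ 2 + a * b * x.imK ^ 2

/-- A subgroup of `PSU_h` arises from the quaternion algebra `(a,b/ℚ)` if it is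
commensurable with the image in `PSU_h` of `σ(A(ℤ)¹)` for some `ℚ`-algebra morphism
`σ : A → M₃(ℂ)` with `σ(A(ℤ)¹) ⊆ SU_h`. -/
def ArisesFrom (a b : ℤ) (Γ : Subgroup PSUhGrp) : Prop :=
  ∃ σ : ℍ[ℚ, (a : ℚ), (b : ℚ)] →ₐ[ℚ] Matrix (Fin 3) (Fin 3) ℂ,
    (∀ x : ℍ[ℚ, (a : ℚ), (b : ℚ)], IntQuat x → qnorm a b x = 1 → σ x ∈ SUhSet) ∧
    Subgroup.Commensurable Γ (Subgroup.closure {γ : PSUhGrp | ∃ g : SUh,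
      (∃ x : ℍ[ℚ, (a : ℚ), (b : ℚ)], IntQuat x ∧ qnorm a b x = 1 ∧
        ((g : SL3C) : Matrix (Fin 3) (Fin 3) ℂ) = σ x) ∧ γ = QuotientGroup.mk g})

/-- The explicit matrix realization `σ_{a,b}` of the quaternion algebra `(a,b/ℚ)`. -/
def sigmaMat (a b : ℤ) (x : ℍ[ℚ, (a : ℚ), (b : ℚ)]) : Matrix (Fin 3) (Fin 3) ℂ :=
  !![(x.re : ℂ) + (x.imI : ℂ) * (Real.sqrt (a : ℝ) : ℂ), 0,
      ((x.imJ : ℂ) + (x.imK : ℂ) * (Real.sqrt (a : ℝ) : ℂ)) *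
        (Complex.I * (Real.sqrt |(b : ℝ)| : ℂ));
     0, 1, 0;
     ((x.imJ : ℂ) - (x.imK : ℂ) * (Real.sqrt (a : ℝ) : ℂ)) *
        (Complex.I * (Real.sqrt |(b : ℝ)| : ℂ)), 0,
      (x.re : ℂ) - (x.imI : ℂ) * (Real.sqrt (a : ℝ) : ℂ)]

/-- The matrix `γ₀` conjugating the stabiliser of `[0:1:0]` to that of `[-2D:0:1]`. -/
def gamma0 (D : ℕ) : Matrix (Fin 3) (Fin 3) ℂ :=
  (-(1 / Real.sqrt 2 : ℝ) : ℂ) •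
    !![(Real.sqrt D : ℂ), (Real.sqrt (2 * D) : ℂ), (Real.sqrt D : ℂ);
       1, 0, -1;
       (1 / (2 * Real.sqrt D) : ℂ), -(1 / Real.sqrt (2 * D) : ℂ), (1 / (2 * Real.sqrt D) : ℂ)]

/-- `T` is a division algebra: every nonzero element is invertible. -/
def IsDivisionAlg (T : Type*) [Ring T] : Prop :=
  ∀ x : T, x ≠ 0 → IsUnit x

/-- The polar chain of a positive point `P`: the set of null points orthogonal to `P`. -/
def polarChain (P : ProjC2) : Set ProjC2 :=
  {q | hprod q.rep P.rep = 0 ∧ hform q.rep = 0}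

/-! Up to `SU_h` with entries in `K`, a point `z ≠ 0` of `K³` has a normal form depending only on
`h(z)`. One first makes `z₂ ≠ 0` (swapping `z₀` and `z₂`, after a Heisenberg translation if
`z₀ = z₂ = 0`); the Heisenberg translation with `r = -z₁/z₂` then kills `z₁`, the dilation by
`a = 2 z̄₂` makes the last coordinate `1/2`, and a vertical translation makes the first one `-h(z)`.
All these matrices have entries in `K` because `K`, being quadratic over `ℚ` and hence normal, is
stable under complex conjugation. -/

lemma IntermediateField.conj_mem_of_finrank_eq_two {K : IntermediateField ℚ ℂ}
    (hK : Module.finrank ℚ K = 2) {x : ℂ} (hx : x ∈ K) : conj x ∈ K := by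
  -- explicit so as to use the `IntermediateField` ℚ-algebra structure on `K`, which instance
  -- search would replace by `DivisionRing.toRatAlgebra`
  rw [← @AlgHom.fieldRange_of_normal ℚ ℂ _ _ _ K
    (@Algebra.IsQuadraticExtension.normal ℚ K _ _ _ ⟨hK⟩)
    ((Complex.conjAe.toAlgHom.restrictScalars ℚ).comp K.val)]
  exact ⟨⟨x, hx⟩, rfl⟩

lemma ofReal_hform (z : Fin 3 → ℂ) :
    (hform z : ℂ) = -(z 0 * conj (z 2)) - z 2 * conj (z 0) + z 1 * conj (z 1) := by
  rw [hform, ← Complex.conj_eq_iff_re]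
  simp only [map_add, map_sub, map_neg, map_mul, Complex.conj_conj]
  ring

def heisenbergMat (r s : ℂ) : Matrix (Fin 3) (Fin 3) ℂ := !![1, conj r, s; 0, 1, r; 0, 0, 1]

def dilationMat (a : ℂ) : Matrix (Fin 3) (Fin 3) ℂ :=
  !![a, 0, 0; 0, conj a / a, 0; 0, 0, (conj a)⁻¹]

def swapMat : Matrix (Fin 3) (Fin 3) ℂ := !![0, 0, 1; 0, -1, 0; 1, 0, 0]

lemma heisenbergMat_mulVec (r s : ℂ) (z : Fin 3 → ℂ) :
    heisenbergMat r s *ᵥ z = ![z 0 + conj r * z 1 + s * z 2, z 1 + r * z 2, z 2] := by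
  ext i; fin_cases i <;> simp [heisenbergMat, mulVec, dotProduct, Fin.sum_univ_three]

lemma dilationMat_mulVec (a : ℂ) (z : Fin 3 → ℂ) :
    dilationMat a *ᵥ z = ![a * z 0, conj a / a * z 1, (conj a)⁻¹ * z 2] := by
  ext i; fin_cases i <;> simp [dilationMat, mulVec, dotProduct, Fin.sum_univ_three]

lemma swapMat_mulVec (z : Fin 3 → ℂ) : swapMat *ᵥ z = ![z 2, -z 1, z 0] := by
  ext i; fin_cases i <;> simp [swapMat, mulVec, dotProduct, Fin.sum_univ_three]

lemma det_heisenbergMat (r s : ℂ) : (heisenbergMat r s).det = 1 := by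
  simp [heisenbergMat, det_fin_three]

lemma det_dilationMat {a : ℂ} (ha : a ≠ 0) : (dilationMat a).det = 1 := by
  have ha' : conj a ≠ 0 := (map_ne_zero _).2 ha
  simp [dilationMat, det_fin_three]
  field_simp

lemma det_swapMat : swapMat.det = 1 := by
  simp [swapMat, det_fin_three]

lemma hform_heisenbergMat_mulVec {r s : ℂ} (hrs : s + conj s = r * conj r) (z : Fin 3 → ℂ) :
    hform (heisenbergMat r s *ᵥ z) = hform z := by
  rw [heisenbergMat_mulVec]
  apply Complex.ofReal_injective
  rw [ofReal_hform, ofReal_hform]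
  simp only [cons_val_zero, cons_val_one, cons_val_two, tail_cons, head_cons, map_add, map_mul,
    Complex.conj_conj]
  linear_combination (-(z 2 * conj (z 2))) * hrs

lemma hform_dilationMat_mulVec {a : ℂ} (ha : a ≠ 0) (z : Fin 3 → ℂ) :
    hform (dilationMat a *ᵥ z) = hform z := by
  have ha' : conj a ≠ 0 := (map_ne_zero _).2 ha
  rw [dilationMat_mulVec]
  apply Complex.ofReal_injective
  rw [ofReal_hform, ofReal_hform]
  simp only [cons_val_zero, cons_val_one, cons_val_two, tail_cons, head_cons, map_mul, map_inv₀,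
    map_div₀, Complex.conj_conj]
  field_simp

lemma hform_swapMat_mulVec (z : Fin 3 → ℂ) : hform (swapMat *ᵥ z) = hform z := by
  rw [swapMat_mulVec]
  apply Complex.ofReal_injective
  rw [ofReal_hform, ofReal_hform]
  simp only [cons_val_zero, cons_val_one, cons_val_two, tail_cons, head_cons, map_neg]
  ring

def SUhRatRel (K : IntermediateField ℚ ℂ) (z w : Fin 3 → ℂ) : Prop :=
  ∃ g ∈ SUhIn K.toSubalgebra.toSubring, ((g : SL3C) : Matrix (Fin 3) (Fin 3) ℂ) *ᵥ z = w

namespace SUhRatRel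

variable {K : IntermediateField ℚ ℂ} {z w v : Fin 3 → ℂ}

lemma trans (hzw : SUhRatRel K z w) (hwv : SUhRatRel K w v) : SUhRatRel K z v := by
  obtain ⟨g, hg, rfl⟩ := hzw
  obtain ⟨g', hg', rfl⟩ := hwv
  exact ⟨g' * g, mul_mem hg' hg, by simp [mulVec_mulVec]⟩

lemma hform_eq (h : SUhRatRel K z w) : hform w = hform z := by
  obtain ⟨g, -, rfl⟩ := h
  exact g.2 z

lemma of_matrix {M : Matrix (Fin 3) (Fin 3) ℂ} (hdet : M.det = 1)
    (hM : ∀ z, hform (M *ᵥ z) = hform z) (hK : ∀ i j, M i j ∈ K) (z : Fin 3 → ℂ) :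
    SUhRatRel K z (M *ᵥ z) :=
  ⟨⟨⟨M, hdet⟩, hM⟩, hK, rfl⟩

lemma heisenberg (hK : Module.finrank ℚ K = 2) {r s : ℂ} (hr : r ∈ K) (hs : s ∈ K)
    (hrs : s + conj s = r * conj r) (z : Fin 3 → ℂ) :
    SUhRatRel K z ![z 0 + conj r * z 1 + s * z 2, z 1 + r * z 2, z 2] := by
  rw [← heisenbergMat_mulVec]
  refine of_matrix (det_heisenbergMat r s) (hform_heisenbergMat_mulVec hrs) (fun i j => ?_) z
  have hr' := IntermediateField.conj_mem_of_finrank_eq_two hK hr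
  fin_cases i <;> fin_cases j <;> simp [heisenbergMat, hr, hs, hr']

lemma dilation (hK : Module.finrank ℚ K = 2) {a : ℂ} (ha : a ∈ K) (ha0 : a ≠ 0)
    (z : Fin 3 → ℂ) :
    SUhRatRel K z ![a * z 0, conj a / a * z 1, (conj a)⁻¹ * z 2] := by
  rw [← dilationMat_mulVec]
  refine of_matrix (det_dilationMat ha0) (hform_dilationMat_mulVec ha0) (fun i j => ?_) z
  have ha' := IntermediateField.conj_mem_of_finrank_eq_two hK ha
  fin_cases i <;> fin_cases j <;> simp [dilationMat, ha, div_mem ha' ha, inv_mem ha']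

lemma swap (z : Fin 3 → ℂ) : SUhRatRel K z ![z 2, -z 1, z 0] := by
  rw [← swapMat_mulVec]
  refine of_matrix det_swapMat hform_swapMat_mulVec (fun i j => ?_) z
  fin_cases i <;> fin_cases j <;> simp [swapMat]

lemma exists_second_eq_zero (hK : Module.finrank ℚ K = 2) (hz : ∀ i, z i ∈ K) (hz2 : z 2 ≠ 0) :
    ∃ x ∈ K, SUhRatRel K z ![x, 0, z 2] := by
  set r := -z 1 / z 2
  have hr : r ∈ K := div_mem (neg_mem (hz 1)) (hz 2)
  have hr' := IntermediateField.conj_mem_of_finrank_eq_two hK hr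
  have hs : r * conj r / 2 ∈ K := div_mem (mul_mem hr hr') (ofNat_mem K 2)
  refine ⟨_, add_mem (add_mem (hz 0) (mul_mem hr' (hz 1))) (mul_mem hs (hz 2)), ?_⟩
  convert heisenberg hK hr hs (by simp [map_ofNat]; ring) z using 1
  ext i; fin_cases i <;> simp [r]
  field_simp; ring

lemma exists_last_eq_half (hK : Module.finrank ℚ K = 2) {x c : ℂ} (hx : x ∈ K) (hc : c ∈ K)
    (hc0 : c ≠ 0) : ∃ y ∈ K, SUhRatRel K ![x, 0, c] ![y, 0, 1 / 2] := by
  have ha := mul_mem (ofNat_mem K 2) (IntermediateField.conj_mem_of_finrank_eq_two hK hc)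
  refine ⟨_, mul_mem ha hx, ?_⟩
  convert dilation hK ha (by simpa using hc0) ![x, 0, c] using 1
  ext i; fin_cases i <;> simp [map_ofNat]
  field_simp

lemma normalize_first (hK : Module.finrank ℚ K = 2) {x : ℂ} (hx : x ∈ K) :
    SUhRatRel K ![x, 0, 1 / 2] ![-(hform ![x, 0, 1 / 2] : ℂ), 0, 1 / 2] := by
  have hs : -(x - conj x) ∈ K :=
    neg_mem (sub_mem hx (IntermediateField.conj_mem_of_finrank_eq_two hK hx))
  convert heisenberg hK (zero_mem K) hs (by simp) ![x, 0, 1 / 2] using 1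
  ext i; fin_cases i <;> simp [ofReal_hform, map_ofNat]
  ring

lemma exists_last_ne_zero (hK : Module.finrank ℚ K = 2) (hz : ∀ i, z i ∈ K) (hz0 : z ≠ 0) :
    ∃ w, (∀ i, w i ∈ K) ∧ w 2 ≠ 0 ∧ SUhRatRel K z w := by
  rcases ne_or_eq (z 2) 0 with h2 | h2
  · exact ⟨z, hz, h2, 1, one_mem _, by simp⟩
  rcases ne_or_eq (z 0) 0 with h0 | h0
  · refine ⟨_, fun i => ?_, by simpa using h0, swap z⟩
    fin_cases i <;> simp [hz]
  have h1 : z 1 ≠ 0 := fun h1 => hz0 (by ext i; fin_cases i <;> assumption)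
  -- `(0, z₁, 0)` is first moved to `(z₁, z₁, 0)`
  have hhalf : (1 / 2 : ℂ) ∈ K := div_mem (one_mem K) (ofNat_mem K 2)
  refine ⟨![0, -z 1, z 1], fun i => ?_, by simpa using h1,
    (heisenberg hK (one_mem K) hhalf (by simp [map_ofNat]; norm_num) z).trans ?_⟩
  · fin_cases i <;> simp [hz]
  · convert swap _ using 1
    ext i; fin_cases i <;> simp [h0, h2]

lemma normal_form (hK : Module.finrank ℚ K = 2) (hz : ∀ i, z i ∈ K) (hz0 : z ≠ 0) :
    SUhRatRel K z ![-(hform z : ℂ), 0, 1 / 2] := by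
  obtain ⟨w, hw, hw2, hzw⟩ := exists_last_ne_zero hK hz hz0
  obtain ⟨x, hx, hwx⟩ := exists_second_eq_zero hK hw hw2
  obtain ⟨y, hy, hxy⟩ := exists_last_eq_half hK hx (hw 2) hw2
  have hzy := (hzw.trans hwx).trans hxy
  rw [← hzy.hform_eq]
  exact hzy.trans (normalize_first hK hy)

lemma exists_pactQ_eq (h : SUhRatRel K z w) (hz : z ≠ 0) (hw : w ≠ 0) :
    ∃ γ ∈ PSUhRat K, pactQ γ (Projectivization.mk ℂ z hz) = Projectivization.mk ℂ w hw := by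
  obtain ⟨g, hg, rfl⟩ := h
  exact ⟨g, Subgroup.mem_map_of_mem _ hg, pact_mk g z hz⟩

end SUhRatRel

lemma ptD_two_mul (D : ℕ) :
    ptD (2 * D) = Projectivization.mk ℂ ![-(D : ℂ), 0, 1 / 2] (by simp) := by
  rw [ptD, Projectivization.mk_eq_mk_iff]
  refine ⟨Units.mk0 2 two_ne_zero, ?_⟩
  ext i; fin_cases i <;> simp

theorem stmt_9_general (K : IntermediateField ℚ ℂ) (hK : IsImagQuad K)
    (z : Fin 3 → ℂ) (hzO : ∀ i, z i ∈ ringOfInt K)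
    (D : ℕ) (hh : hform z = D) :
    ∀ hz : z ≠ 0, ∃ γ ∈ PSUhRat K,
      pactQ γ (Projectivization.mk ℂ z hz) = ptD (2 * D) := by
  intro hz
  have hzy := SUhRatRel.normal_form hK.1 (fun i => (hzO i).2) hz
  rw [hh, Complex.ofReal_natCast] at hzy
  rw [ptD_two_mul]
  exact hzy.exists_pactQ_eq hz _

/-- If `z₀, z₁, z₂ ∈ O_K` are relatively prime with `D = h(z₀,z₁,z₂)` a positive integer,
then some `γ ∈ PSU_h(K)` maps `[z₀:z₁:z₂]` to `[-2D:0:1]`. -/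
theorem stmt_9 (K : IntermediateField ℚ ℂ) (hK : IsImagQuad K)
    (z : Fin 3 → ℂ) (hzO : ∀ i, z i ∈ ringOfInt K) (hrp : RelPrimeOK K z)
    (D : ℕ) (hD : 0 < D) (hh : hform z = D) :
    ∀ hz : z ≠ 0, ∃ γ ∈ PSUhRat K,
      pactQ γ (Projectivization.mk ℂ z hz) = ptD (2 * D) :=
  stmt_9_general K hK z hzO D hh
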